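/- Let h : [0,T] → ℝ be differentiable with h(T) = 0, satisfying h'(t) + c(t) h(t) = G(t) where c is continuous with |∫_s^t c| ≤ K for all s,t ∈ [0,T] and G is continuous. Then ∫_0^T |h(s)|² ds ≤ e^{2K} T² ∫_0^T |G(t)|² dt. -/

import Mathlib

/-!
With an integrating factor `e^C`, `C' = c`, the solution vanishing at `T` is
`h s = -∫_s^T e^{C t - C s} G t dt`, and `C t - C s = ∫_s^t c ≤ K` gives the pointwise bound
`|h s| ≤ e^K ∫_0^T |G|`. Squaring, integrating over `[0, T]` and applying Cauchy–Schwarz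
`(∫_0^T |G|)² ≤ T ∫_0^T |G|²` gives the estimate.
-/

open intervalIntegral

open Set Real Filter

theorem sq_intervalIntegral_le_mul_integral_sq {a b : ℝ} (hab : a ≤ b) {f : ℝ → ℝ}
    (hf : IntervalIntegrable f MeasureTheory.volume a b)
    (hf2 : IntervalIntegrable (fun t => f t ^ 2) MeasureTheory.volume a b) :
    (∫ t in a..b, f t) ^ 2 ≤ (b - a) * ∫ t in a..b, f t ^ 2 := by
  rcases hab.eq_or_lt with rfl | hlt
  · simp
  set I := ∫ t in a..b, f t
  have hvar : 0 ≤ ∫ t in a..b, ((b - a) * f t - I) ^ 2 :=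
    integral_nonneg hab fun _ _ => sq_nonneg _
  have hexpand : ∫ t in a..b, ((b - a) * f t - I) ^ 2
      = (b - a) * ((b - a) * (∫ t in a..b, f t ^ 2) - I ^ 2) := by
    have hptw : ∀ t, ((b - a) * f t - I) ^ 2
        = (b - a) ^ 2 * f t ^ 2 - 2 * (b - a) * I * f t + I ^ 2 := by
      intro t; ring
    simp_rw [hptw]
    rw [integral_add ((hf2.const_mul _).sub (hf.const_mul _)) intervalIntegrable_const,
      integral_sub (hf2.const_mul _) (hf.const_mul _), integral_const_mul, integral_const_mul,
      intervalIntegral.integral_const, smul_eq_mul]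
    ring
  rw [hexpand] at hvar
  nlinarith [sub_pos.2 hlt]

theorem exists_hasDerivAt_of_continuousOn_Icc {a b : ℝ} (hab : a ≤ b) {c : ℝ → ℝ}
    (hc : ContinuousOn c (Icc a b)) :
    ∃ C : ℝ → ℝ, ∀ t ∈ Icc a b, HasDerivAt C (c t) t := by
  -- Extending `c` by constants makes its primitive differentiable at the endpoints too.
  have hext : Continuous (IccExtend hab ((Icc a b).domRestrict c)) :=
    (continuousOn_iff_continuous_domRestrict.1 hc).Icc_extend'
  refine ⟨fun t => ∫ r in a..t, IccExtend hab ((Icc a b).domRestrict c) r, fun t ht => ?_⟩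
  simpa [IccExtend_of_mem hab _ ht] using (hext.integral_hasStrictDerivAt a t).hasDerivAt

theorem eq_neg_integral_exp_mul_of_hasDerivAt {c G h C : ℝ → ℝ} {s b : ℝ} (hsb : s ≤ b)
    (hC : ∀ t ∈ Icc s b, HasDerivAt C (c t) t) (hG : ContinuousOn G (Icc s b))
    (hode : ∀ t ∈ Icc s b, HasDerivAt h (G t - c t * h t) t) (hb : h b = 0) :
    h s = -∫ t in s..b, exp (C t - C s) * G t := by
  -- `e^C` is an integrating factor: `(h e^C)' = e^C G`.
  have hderiv : ∀ t ∈ uIcc s b,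
      HasDerivAt (fun t => h t * exp (C t)) (exp (C t) * G t) t := by
    intro t ht
    rw [uIcc_of_le hsb] at ht
    exact ((hode t ht).fun_mul (hC t ht).exp).congr_deriv (by ring)
  have hCcont : ContinuousOn C (Icc s b) := fun t ht => (hC t ht).continuousAt.continuousWithinAt
  have hint : IntervalIntegrable (fun t => exp (C t) * G t) MeasureTheory.volume s b :=
    ((continuous_exp.comp_continuousOn hCcont).mul hG).intervalIntegrable_of_Icc hsb
  have hFTC := integral_eq_sub_of_hasDerivAt hderiv hint
  simp only [hb, zero_mul, zero_sub] at hFTC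
  have hrw : ∀ t, exp (C t - C s) * G t = exp (-C s) * (exp (C t) * G t) := by
    intro t; rw [sub_eq_add_neg, exp_add]; ring
  simp_rw [hrw]
  rw [integral_const_mul, hFTC, mul_neg, neg_neg, mul_left_comm, ← exp_add, neg_add_cancel,
    exp_zero, mul_one]

theorem abs_le_exp_mul_integral_abs_of_hasDerivAt {c G h : ℝ → ℝ} {s b K : ℝ}
    (hsb : s ≤ b) (hc : ContinuousOn c (Icc s b)) (hG : ContinuousOn G (Icc s b))
    (hK : ∀ t ∈ Icc s b, ∫ r in s..t, c r ≤ K)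
    (hode : ∀ t ∈ Icc s b, HasDerivAt h (G t - c t * h t) t) (hb : h b = 0) :
    |h s| ≤ exp K * ∫ t in s..b, |G t| := by
  obtain ⟨C, hC⟩ := exists_hasDerivAt_of_continuousOn_Icc hsb hc
  have hCK : ∀ t ∈ Icc s b, C t - C s ≤ K := by
    intro t ht
    have hsub : uIcc s t ⊆ Icc s b := by rw [uIcc_of_le ht.1]; exact Icc_subset_Icc le_rfl ht.2
    rw [← integral_eq_sub_of_hasDerivAt (fun r hr => hC r (hsub hr))
      ((hc.mono hsub).intervalIntegrable)]
    exact hK t ht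
  rw [eq_neg_integral_exp_mul_of_hasDerivAt hsb hC hG hode hb, abs_neg, ← integral_const_mul]
  refine norm_integral_le_of_norm_le (E := ℝ) hsb
    (Eventually.of_forall fun t ht => ?_) ((hG.abs.intervalIntegrable_of_Icc hsb).const_mul _)
  rw [Real.norm_eq_abs, abs_mul, abs_exp]
  gcongr
  exact hCK t (Ioc_subset_Icc_self ht)

/-- One-dimensional `L²` stability estimate for the transport equation
`h' + c h = G` with `h(T) = 0` and integrating-factor ratio bounded by `e^K`:
`∫_0^T |h|² ≤ e^{2K} T² ∫_0^T |G|²`. -/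
theorem transport_L2_estimate (T K : ℝ) (hT : 0 ≤ T) (c G h : ℝ → ℝ)
    (hc : ContinuousOn c (Set.Icc 0 T)) (hG : ContinuousOn G (Set.Icc 0 T))
    (hK : ∀ s ∈ Set.Icc 0 T, ∀ t ∈ Set.Icc 0 T, |∫ r in s..t, c r| ≤ K)
    (hode : ∀ t ∈ Set.Icc 0 T, HasDerivAt h (G t - c t * h t) t)
    (hterm : h T = 0) :
    (∫ s in (0:ℝ)..T, |h s| ^ 2) ≤ Real.exp (2 * K) * T ^ 2 * ∫ t in (0:ℝ)..T, |G t| ^ 2 := by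
  set J := ∫ t in (0:ℝ)..T, |G t|
  have hbound : ∀ s ∈ Icc 0 T, |h s| ^ 2 ≤ (exp K * J) ^ 2 := by
    intro s hs
    have hsub : Icc s T ⊆ Icc 0 T := Icc_subset_Icc hs.1 le_rfl
    have hpt := abs_le_exp_mul_integral_abs_of_hasDerivAt hs.2 (hc.mono hsub) (hG.mono hsub)
      (fun t ht => (le_abs_self _).trans (hK s hs t (hsub ht)))
      (fun t ht => hode t (hsub ht)) hterm
    have hJ : ∫ t in s..T, |G t| ≤ J :=
      integral_mono_interval hs.1 hs.2 le_rfl (Eventually.of_forall fun _ => abs_nonneg _)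
        (hG.abs.intervalIntegrable_of_Icc hT)
    gcongr
    exact hpt.trans (by gcongr)
  have hhcont : ContinuousOn h (Icc 0 T) := fun t ht => (hode t ht).continuousAt.continuousWithinAt
  have hCS := sq_intervalIntegral_le_mul_integral_sq hT (hG.abs.intervalIntegrable_of_Icc hT)
    ((hG.abs.pow 2).intervalIntegrable_of_Icc hT)
  calc (∫ s in (0:ℝ)..T, |h s| ^ 2) ≤ ∫ _ in (0:ℝ)..T, (exp K * J) ^ 2 :=
        integral_mono_on hT ((hhcont.abs.pow 2).intervalIntegrable_of_Icc hT)
          intervalIntegrable_const hbound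
    _ = exp (2 * K) * T * J ^ 2 := by
        rw [intervalIntegral.integral_const, smul_eq_mul, mul_pow, ← exp_nat_mul]; push_cast; ring
    _ ≤ exp (2 * K) * T * (T * ∫ t in (0:ℝ)..T, |G t| ^ 2) := by
        gcongr; simpa using hCS
    _ = exp (2 * K) * T ^ 2 * ∫ t in (0:ℝ)..T, |G t| ^ 2 := by ring
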